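/- arXiv:2506.11803 — 6 statements merged into one kernel-verified Lean document; each statement's English description precedes it below -/
import Mathlib

section
/- Let N ≥ 1, let E and F be real inner product spaces, and for i = 1,…,N let L_i : E × F → ℝ be differentiable with ‖∇_w L_i(w,v) − ∇_w L_i(w′,v)‖ ≤ L‖w − w′‖ for all w, w′ ∈ E, v ∈ F, for some L > 0. Fix points w_1,…,w_N ∈ E and v_1,…,v_N ∈ F, set w̄ := (1/N)∑_{i=1}^N w_i, Ḡ := (1/N)∑_{i=1}^N ∇_w L_i(w̄, v_i) and G := (1/N)∑_{i=1}^N ∇_w L_i(w_i, v_i). Then for every η > 0: ⟨Ḡ, −η G⟩ ≤ (η L²/(2N))∑_{i=1}^N ‖w̄ − w_i‖² − (η/2)‖Ḡ‖² − (η/2)‖G‖². -/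
/-! By polarization, `⟪Ḡ, -η G⟫ = η/2 (‖Ḡ - G‖² - ‖Ḡ‖² - ‖G‖²)`. The difference `Ḡ - G` is the
average of the `N` gradient differences `∇_w L_i(w̄, v_i) - ∇_w L_i(w_i, v_i)`, so by convexity of
`‖·‖²` and the Lipschitz bound, `‖Ḡ - G‖² ≤ (L²/N) ∑ ‖w̄ - w_i‖²`. -/

open scoped RealInnerProductSpace

open Finset in
theorem norm_inv_card_smul_sum_sq_le {ι E : Type*} [SeminormedAddCommGroup E] [NormedSpace ℝ E]
    (s : Finset ι) (x : ι → E) :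
    ‖(#s : ℝ)⁻¹ • ∑ i ∈ s, x i‖ ^ 2 ≤ (#s : ℝ)⁻¹ * ∑ i ∈ s, ‖x i‖ ^ 2 := by
  rcases s.eq_empty_or_nonempty with rfl | hs
  · simp
  have hcard : (0 : ℝ) < #s := by exact_mod_cast hs.card_pos
  calc ‖(#s : ℝ)⁻¹ • ∑ i ∈ s, x i‖ ^ 2
      = (#s : ℝ)⁻¹ ^ 2 * ‖∑ i ∈ s, x i‖ ^ 2 := by
        rw [norm_smul, Real.norm_of_nonneg (by positivity), mul_pow]
    _ ≤ (#s : ℝ)⁻¹ ^ 2 * (∑ i ∈ s, ‖x i‖) ^ 2 := by gcongr; exact norm_sum_le _ _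
    _ ≤ (#s : ℝ)⁻¹ ^ 2 * (#s * ∑ i ∈ s, ‖x i‖ ^ 2) := by gcongr; exact sq_sum_le_card_mul_sum_sq
    _ = (#s : ℝ)⁻¹ * ∑ i ∈ s, ‖x i‖ ^ 2 := by field_simp

theorem stmt2_general {E F : Type*}
    [NormedAddCommGroup E] [InnerProductSpace ℝ E]
    (N : ℕ)
    (gradW : Fin N → E → F → E)
    (L : ℝ)
    (hLipW : ∀ i (w w' : E) (v : F), ‖gradW i w v - gradW i w' v‖ ≤ L * ‖w - w'‖)
    (w : Fin N → E) (v : Fin N → F)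
    (wbar : E)
    (Gbar G : E)
    (hGbar : Gbar = (N : ℝ)⁻¹ • ∑ i, gradW i wbar (v i))
    (hG : G = (N : ℝ)⁻¹ • ∑ i, gradW i (w i) (v i)) :
    ∀ η : ℝ, 0 < η →
      ⟪Gbar, (-η) • G⟫ ≤
        η * L ^ 2 / (2 * N) * ∑ i, ‖wbar - w i‖ ^ 2
          - η / 2 * ‖Gbar‖ ^ 2 - η / 2 * ‖G‖ ^ 2 := by
  intro η hη
  have hsub : Gbar - G = (N : ℝ)⁻¹ • ∑ i, (gradW i wbar (v i) - gradW i (w i) (v i)) := by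
    rw [hGbar, hG, ← smul_sub, Finset.sum_sub_distrib]
  have hdist : ‖Gbar - G‖ ^ 2 ≤ L ^ 2 / N * ∑ i, ‖wbar - w i‖ ^ 2 := by
    calc ‖Gbar - G‖ ^ 2
        ≤ (N : ℝ)⁻¹ * ∑ i, ‖gradW i wbar (v i) - gradW i (w i) (v i)‖ ^ 2 := by
          simpa [hsub] using norm_inv_card_smul_sum_sq_le Finset.univ
            fun i => gradW i wbar (v i) - gradW i (w i) (v i)
      _ ≤ (N : ℝ)⁻¹ * ∑ i, (L * ‖wbar - w i‖) ^ 2 := by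
          gcongr with i
          exact hLipW i _ _ _
      _ = L ^ 2 / N * ∑ i, ‖wbar - w i‖ ^ 2 := by
          simp only [mul_pow, ← Finset.mul_sum]; ring
  have hdist' := mul_le_mul_of_nonneg_left hdist (half_pos hη).le
  rw [real_inner_smul_right,
    real_inner_eq_norm_mul_self_add_norm_mul_self_sub_norm_sub_mul_self_div_two]
  calc -η * ((‖Gbar‖ * ‖Gbar‖ + ‖G‖ * ‖G‖ - ‖Gbar - G‖ * ‖Gbar - G‖) / 2)
      = η / 2 * ‖Gbar - G‖ ^ 2 - η / 2 * ‖Gbar‖ ^ 2 - η / 2 * ‖G‖ ^ 2 := by ring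
    _ ≤ η / 2 * (L ^ 2 / N * ∑ i, ‖wbar - w i‖ ^ 2) - η / 2 * ‖Gbar‖ ^ 2 - η / 2 * ‖G‖ ^ 2 := by
      linarith
    _ = η * L ^ 2 / (2 * N) * ∑ i, ‖wbar - w i‖ ^ 2
          - η / 2 * ‖Gbar‖ ^ 2 - η / 2 * ‖G‖ ^ 2 := by ring

/-- deterministic core of the bound on the inner-product term `C₁`. -/
theorem stmt2 {E F : Type*}
    [NormedAddCommGroup E] [InnerProductSpace ℝ E] [CompleteSpace E]
    [NormedAddCommGroup F] [InnerProductSpace ℝ F] [CompleteSpace F]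
    (N : ℕ) (hN : 1 ≤ N)
    (Lf : Fin N → E × F → ℝ) (hdiff : ∀ i, Differentiable ℝ (Lf i))
    (gradW : Fin N → E → F → E)
    (hgradW : ∀ i w v, HasGradientAt (fun w' => Lf i (w', v)) (gradW i w v) w)
    (L : ℝ) (hL : 0 < L)
    (hLipW : ∀ i (w w' : E) (v : F), ‖gradW i w v - gradW i w' v‖ ≤ L * ‖w - w'‖)
    (w : Fin N → E) (v : Fin N → F)
    (wbar : E) (hwbar : wbar = (N : ℝ)⁻¹ • ∑ i, w i)
    (Gbar G : E)
    (hGbar : Gbar = (N : ℝ)⁻¹ • ∑ i, gradW i wbar (v i))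
    (hG : G = (N : ℝ)⁻¹ • ∑ i, gradW i (w i) (v i)) :
    ∀ η : ℝ, 0 < η →
      ⟪Gbar, (-η) • G⟫ ≤
        η * L ^ 2 / (2 * N) * ∑ i, ‖wbar - w i‖ ^ 2
          - η / 2 * ‖Gbar‖ ^ 2 - η / 2 * ‖G‖ ^ 2 :=
  stmt2_general N gradW L hLipW w v wbar Gbar G hGbar hG
end

section
/- Let F be a finite-dimensional real inner product space, h : F → F an L-Lipschitz map with L > 0, σ ≥ 0, η > 0, and τ ≥ 1 an integer. On a probability space with a filtration (F_r)_{r≥0}, let v_0 be a square-integrable F_0-measurable random vector in F, and for r ≥ 1 define v_r := v_{r−1} − η X_{r−1}, where each X_r is a square-integrable F_{r+1}-measurable random vector satisfying E[X_r | F_r] = h(v_r) and E‖X_r − h(v_r)‖² ≤ σ². Then for every integer s with 1 ≤ s ≤ τ: E‖v_s − v_0‖² ≤ (1 + 1/(2τ−1) + 6η²τL²)·E‖v_{s−1} − v_0‖² + (η² + 6η²τ)·σ² + 6η²τ·E‖X_0‖². -/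
/-!
Write `A = v_{s-1} - v_0` and split the step as `v_s - v_0 = Y - η D`, where
`Y = A - η h(v_{s-1})` is `ℱ_{s-1}`-measurable and `D = X_{s-1} - h(v_{s-1})` has zero conditional
expectation given `ℱ_{s-1}`. The cross term `E⟪Y, D⟫` vanishes by the pull-out property, so
`E‖v_s - v_0‖² = E‖Y‖² + η² E‖D‖²`. Young's inequality with weight `ε = 1/(2τ-1)` (so that
`1 + ε⁻¹ = 2τ`) bounds `E‖Y‖²`, and the gradient is anchored at `v_0` through
`h(v_{s-1}) = (h(v_{s-1}) - h(v_0)) - (X_0 - h(v_0)) + X_0`.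
-/

open MeasureTheory
open scoped InnerProductSpace NNReal ENNReal

theorem add_sq_le_one_add_mul_sq_add {ε : ℝ} (hε : 0 < ε) (x y : ℝ) :
    (x + y) ^ 2 ≤ (1 + ε) * x ^ 2 + (1 + ε⁻¹) * y ^ 2 := by
  have key : (1 + ε) * x ^ 2 + (1 + ε⁻¹) * y ^ 2 - (x + y) ^ 2 = (ε * x - y) ^ 2 / ε := by
    field_simp
    ring
  have : 0 ≤ (ε * x - y) ^ 2 / ε := by positivity
  linarith

theorem sq_le_three_mul_sq_add_of_le_add_add {a b c d : ℝ} (ha : 0 ≤ a) (h : a ≤ b + c + d) :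
    a ^ 2 ≤ 3 * b ^ 2 + 3 * c ^ 2 + 3 * d ^ 2 := by
  nlinarith [sq_nonneg (b - c), sq_nonneg (b - d), sq_nonneg (c - d)]

theorem LipschitzWith.of_norm_sub_le {E G : Type*} [SeminormedAddCommGroup E]
    [SeminormedAddCommGroup G] {g : E → G} {L : ℝ} (hg : ∀ a b, ‖g a - g b‖ ≤ L * ‖a - b‖) :
    LipschitzWith (Real.toNNReal L) g :=
  LipschitzWith.of_dist_le' fun a b => by simpa only [dist_eq_norm] using hg a b

section

variable {Ω F : Type*} {m m0 : MeasurableSpace Ω} {μ : Measure Ω}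

theorem LipschitzWith.memLp_comp [IsFiniteMeasure μ] {E G : Type*} [NormedAddCommGroup E]
    [NormedAddCommGroup G] {K : ℝ≥0} {g : E → G} (hg : LipschitzWith K g) {p : ℝ≥0∞}
    {f : Ω → E} (hf : MemLp f p μ) : MemLp (fun ω => g (f ω)) p μ := by
  have hsub : MemLp (fun ω => g (f ω) - g 0) p μ :=
    (hg.sub (LipschitzWith.const (g 0))).comp_memLp (by simp) hf
  convert hsub.add (memLp_const (g 0)) using 1
  ext ω
  simp

variable [NormedAddCommGroup F]

theorem MeasureTheory.MemLp.integrable_norm_sq {f : Ω → F} (hf : MemLp f 2 μ) :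
    Integrable (fun ω => ‖f ω‖ ^ 2) μ :=
  hf.norm.integrable_sq

theorem integral_norm_comp_sq_le {h : F → F} {L : ℝ}
    (hLip : ∀ a b, ‖h a - h b‖ ≤ L * ‖a - b‖) {u u₀ X₀ : Ω → F}
    (hA : MemLp (fun ω => u ω - u₀ ω) 2 μ) (hD : MemLp (fun ω => X₀ ω - h (u₀ ω)) 2 μ)
    (hX : MemLp X₀ 2 μ) :
    ∫ ω, ‖h (u ω)‖ ^ 2 ∂μ ≤ 3 * L ^ 2 * ∫ ω, ‖u ω - u₀ ω‖ ^ 2 ∂μ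
      + 3 * ∫ ω, ‖X₀ ω - h (u₀ ω)‖ ^ 2 ∂μ + 3 * ∫ ω, ‖X₀ ω‖ ^ 2 ∂μ := by
  have hpt : ∀ ω, ‖h (u ω)‖ ^ 2 ≤ 3 * L ^ 2 * ‖u ω - u₀ ω‖ ^ 2
      + 3 * ‖X₀ ω - h (u₀ ω)‖ ^ 2 + 3 * ‖X₀ ω‖ ^ 2 := by
    intro ω
    have htri : ‖h (u ω)‖ ≤ L * ‖u ω - u₀ ω‖ + ‖X₀ ω - h (u₀ ω)‖ + ‖X₀ ω‖ :=
      calc ‖h (u ω)‖ = ‖(h (u ω) - h (u₀ ω)) + -(X₀ ω - h (u₀ ω)) + X₀ ω‖ := by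
            congr 1; abel
        _ ≤ ‖h (u ω) - h (u₀ ω)‖ + ‖-(X₀ ω - h (u₀ ω))‖ + ‖X₀ ω‖ := norm_add₃_le
        _ ≤ _ := by rw [norm_neg]; gcongr; exact hLip _ _
    have := sq_le_three_mul_sq_add_of_le_add_add (norm_nonneg _) htri
    linarith [mul_pow L ‖u ω - u₀ ω‖ 2]
  have hA2 := hA.integrable_norm_sq.const_mul (3 * L ^ 2)
  have hD2 := hD.integrable_norm_sq.const_mul 3
  have hX2 := hX.integrable_norm_sq.const_mul 3
  calc ∫ ω, ‖h (u ω)‖ ^ 2 ∂μ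
      ≤ ∫ ω, (3 * L ^ 2 * ‖u ω - u₀ ω‖ ^ 2 + 3 * ‖X₀ ω - h (u₀ ω)‖ ^ 2 + 3 * ‖X₀ ω‖ ^ 2) ∂μ :=
        integral_mono_of_nonneg (.of_forall fun ω => by positivity) ((hA2.add hD2).add hX2)
          (.of_forall hpt)
    _ = _ := by
      have hAD : Integrable (fun ω => 3 * L ^ 2 * ‖u ω - u₀ ω‖ ^ 2
          + 3 * ‖X₀ ω - h (u₀ ω)‖ ^ 2) μ := hA2.add hD2
      rw [integral_add hAD hX2, integral_add hA2 hD2, integral_const_mul,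
        integral_const_mul, integral_const_mul]

variable [InnerProductSpace ℝ F]

theorem MeasureTheory.MemLp.integrable_inner {f g : Ω → F} (hf : MemLp f 2 μ)
    (hg : MemLp g 2 μ) : Integrable (fun ω => ⟪f ω, g ω⟫_ℝ) μ :=
  memLp_one_iff_integrable.1 ((innerSL ℝ).memLp_of_bilin 1 hf hg)

theorem integral_inner_eq_zero_of_condExp_eq_zero [CompleteSpace F] (hm : m ≤ m0)
    [SigmaFinite (μ.trim hm)] {Y Z : Ω → F} (hY : StronglyMeasurable[m] Y)
    (hYZ : Integrable (fun ω => ⟪Y ω, Z ω⟫_ℝ) μ) (hZ : Integrable Z μ)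
    (hZ0 : μ[Z|m] =ᵐ[μ] 0) : ∫ ω, ⟪Y ω, Z ω⟫_ℝ ∂μ = 0 := by
  have hpull : μ[fun ω => ⟪Y ω, Z ω⟫_ℝ|m] =ᵐ[μ] 0 := by
    filter_upwards [condExp_bilin_of_stronglyMeasurable_left (innerSL ℝ) hY hYZ hZ, hZ0]
      with ω hω hω0
    exact hω.trans (by simp [hω0])
  rw [← integral_condExp hm, integral_congr_ae hpull, Pi.zero_def, integral_zero]

theorem integral_norm_sub_smul_sq_of_integral_inner_eq_zero {Y D : Ω → F} (hY : MemLp Y 2 μ)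
    (hD : MemLp D 2 μ) (c : ℝ) (horth : ∫ ω, ⟪Y ω, D ω⟫_ℝ ∂μ = 0) :
    ∫ ω, ‖Y ω - c • D ω‖ ^ 2 ∂μ = ∫ ω, ‖Y ω‖ ^ 2 ∂μ + c ^ 2 * ∫ ω, ‖D ω‖ ^ 2 ∂μ := by
  have hexpand : ∀ ω, ‖Y ω - c • D ω‖ ^ 2
      = ‖Y ω‖ ^ 2 - 2 * c * ⟪Y ω, D ω⟫_ℝ + c ^ 2 * ‖D ω‖ ^ 2 := fun ω => by
    rw [norm_sub_sq_real, real_inner_smul_right, norm_smul, mul_pow, Real.norm_eq_abs, sq_abs]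
    ring
  have hYY := hY.integrable_norm_sq
  have hYD : Integrable (fun ω => 2 * c * ⟪Y ω, D ω⟫_ℝ) μ := (hY.integrable_inner hD).const_mul _
  have hDD : Integrable (fun ω => c ^ 2 * ‖D ω‖ ^ 2) μ := hD.integrable_norm_sq.const_mul _
  have hYYD : Integrable (fun ω => ‖Y ω‖ ^ 2 - 2 * c * ⟪Y ω, D ω⟫_ℝ) μ := hYY.sub hYD
  simp_rw [hexpand]
  rw [integral_add hYYD hDD, integral_sub hYY hYD, integral_const_mul, integral_const_mul, horth]
  ring

theorem integral_norm_sub_smul_sq_le {A g : Ω → F} (hA : MemLp A 2 μ) (hg : MemLp g 2 μ)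
    {ε : ℝ} (hε : 0 < ε) (c : ℝ) :
    ∫ ω, ‖A ω - c • g ω‖ ^ 2 ∂μ
      ≤ (1 + ε) * ∫ ω, ‖A ω‖ ^ 2 ∂μ + (1 + ε⁻¹) * c ^ 2 * ∫ ω, ‖g ω‖ ^ 2 ∂μ := by
  have hpt : ∀ ω, ‖A ω - c • g ω‖ ^ 2 ≤ (1 + ε) * ‖A ω‖ ^ 2 + (1 + ε⁻¹) * c ^ 2 * ‖g ω‖ ^ 2 := by
    intro ω
    have htri : ‖A ω - c • g ω‖ ≤ ‖A ω‖ + |c| * ‖g ω‖ := by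
      simpa only [norm_smul, Real.norm_eq_abs] using norm_sub_le (A ω) (c • g ω)
    calc ‖A ω - c • g ω‖ ^ 2 ≤ (‖A ω‖ + |c| * ‖g ω‖) ^ 2 := by gcongr
      _ ≤ (1 + ε) * ‖A ω‖ ^ 2 + (1 + ε⁻¹) * (|c| * ‖g ω‖) ^ 2 :=
        add_sq_le_one_add_mul_sq_add hε _ _
      _ = (1 + ε) * ‖A ω‖ ^ 2 + (1 + ε⁻¹) * c ^ 2 * ‖g ω‖ ^ 2 := by rw [mul_pow, sq_abs]; ring
  have hA2 := hA.integrable_norm_sq.const_mul (1 + ε)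
  have hg2 := hg.integrable_norm_sq.const_mul ((1 + ε⁻¹) * c ^ 2)
  calc ∫ ω, ‖A ω - c • g ω‖ ^ 2 ∂μ
      ≤ ∫ ω, ((1 + ε) * ‖A ω‖ ^ 2 + (1 + ε⁻¹) * c ^ 2 * ‖g ω‖ ^ 2) ∂μ :=
        integral_mono_of_nonneg (.of_forall fun ω => by positivity) (hA2.add hg2)
          (.of_forall hpt)
    _ = _ := by rw [integral_add hA2 hg2, integral_const_mul, integral_const_mul]

theorem integral_norm_sub_smul_sub_sq_le [CompleteSpace F] [IsFiniteMeasure μ] (hm : m ≤ m0)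
    {h : F → F} {L : ℝ} (hLip : ∀ a b, ‖h a - h b‖ ≤ L * ‖a - b‖) {σ ε : ℝ} (hε : 0 < ε) (η : ℝ)
    {u u₀ X X₀ : Ω → F} (hu : StronglyMeasurable[m] u) (hu₀ : StronglyMeasurable[m] u₀)
    (hu2 : MemLp u 2 μ) (hu₀2 : MemLp u₀ 2 μ) (hX2 : MemLp X 2 μ) (hX₀2 : MemLp X₀ 2 μ)
    (hX : μ[X|m] =ᵐ[μ] fun ω => h (u ω)) (hXvar : ∫ ω, ‖X ω - h (u ω)‖ ^ 2 ∂μ ≤ σ ^ 2)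
    (hX₀var : ∫ ω, ‖X₀ ω - h (u₀ ω)‖ ^ 2 ∂μ ≤ σ ^ 2) :
    ∫ ω, ‖u ω - η • X ω - u₀ ω‖ ^ 2 ∂μ ≤
      (1 + ε + 3 * (1 + ε⁻¹) * η ^ 2 * L ^ 2) * ∫ ω, ‖u ω - u₀ ω‖ ^ 2 ∂μ
        + (η ^ 2 + 3 * (1 + ε⁻¹) * η ^ 2) * σ ^ 2
        + 3 * (1 + ε⁻¹) * η ^ 2 * ∫ ω, ‖X₀ ω‖ ^ 2 ∂μ := by
  have hh := LipschitzWith.of_norm_sub_le hLip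
  have hg2 : MemLp (fun ω => h (u ω)) 2 μ := hh.memLp_comp hu2
  have hgm : StronglyMeasurable[m] fun ω => h (u ω) := hh.continuous.comp_stronglyMeasurable hu
  have hA2 : MemLp (fun ω => u ω - u₀ ω) 2 μ := hu2.sub hu₀2
  have hY2 : MemLp (fun ω => u ω - u₀ ω - η • h (u ω)) 2 μ := hA2.sub (hg2.const_smul η)
  have hD2 : MemLp (fun ω => X ω - h (u ω)) 2 μ := hX2.sub hg2
  have hD0 : μ[fun ω => X ω - h (u ω)|m] =ᵐ[μ] 0 := by
    filter_upwards [condExp_sub (hX2.integrable one_le_two) (hg2.integrable one_le_two) m, hX]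
      with ω hω hωX
    refine hω.trans ?_
    simp [hωX, condExp_of_stronglyMeasurable hm hgm (hg2.integrable one_le_two)]
  have horth := integral_inner_eq_zero_of_condExp_eq_zero hm
    ((hu.sub hu₀).sub (hgm.const_smul η)) (hY2.integrable_inner hD2) (hD2.integrable one_le_two)
    hD0
  have hsplit : ∀ ω, u ω - η • X ω - u₀ ω = (u ω - u₀ ω - η • h (u ω)) - η • (X ω - h (u ω)) :=
    fun ω => by rw [smul_sub]; abel
  simp_rw [hsplit]
  rw [integral_norm_sub_smul_sq_of_integral_inner_eq_zero hY2 hD2 η horth]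
  have hY := integral_norm_sub_smul_sq_le hA2 hg2 hε η
  have hg := integral_norm_comp_sq_le hLip hA2 (hX₀2.sub (hh.memLp_comp hu₀2)) hX₀2
  have hc : 0 ≤ (1 + ε⁻¹) * η ^ 2 := by positivity
  linarith [mul_le_mul_of_nonneg_left hg hc, mul_le_mul_of_nonneg_left hXvar (sq_nonneg η),
    mul_le_mul_of_nonneg_left hX₀var hc]

end

theorem stmt6_general {F : Type*}
    [NormedAddCommGroup F] [InnerProductSpace ℝ F] [FiniteDimensional ℝ F]
    {Ω : Type*} {m0 : MeasurableSpace Ω} (μ : Measure Ω) [IsProbabilityMeasure μ]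
    (ℱ : Filtration ℕ m0)
    (h : F → F) (L : ℝ) (hLip : ∀ a b, ‖h a - h b‖ ≤ L * ‖a - b‖)
    (σ η : ℝ) (τ : ℕ)
    (v X : ℕ → Ω → F)
    (hv0meas : StronglyMeasurable[ℱ 0] (v 0)) (hv02 : MemLp (v 0) 2 μ)
    (hrec : ∀ r : ℕ, v (r + 1) = fun ω => v r ω - η • X r ω)
    (hX2 : ∀ r, MemLp (X r) 2 μ)
    (hXmeas : ∀ r, StronglyMeasurable[ℱ (r + 1)] (X r))
    (hunbiased : ∀ r, μ[X r|ℱ r] =ᵐ[μ] fun ω => h (v r ω))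
    (hvar : ∀ r, ∫ ω, ‖X r ω - h (v r ω)‖ ^ 2 ∂μ ≤ σ ^ 2) :
    ∀ s : ℕ, 1 ≤ s → s ≤ τ →
      ∫ ω, ‖v s ω - v 0 ω‖ ^ 2 ∂μ ≤
        (1 + 1 / (2 * (τ : ℝ) - 1) + 6 * η ^ 2 * τ * L ^ 2)
            * ∫ ω, ‖v (s - 1) ω - v 0 ω‖ ^ 2 ∂μ
          + (η ^ 2 + 6 * η ^ 2 * τ) * σ ^ 2
          + 6 * η ^ 2 * τ * ∫ ω, ‖X 0 ω‖ ^ 2 ∂μ := by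
  have hvm : ∀ n, StronglyMeasurable[ℱ n] (v n) := by
    intro n
    induction n with
    | zero => exact hv0meas
    | succ k ih =>
      rw [hrec k]
      exact (ih.mono (ℱ.mono k.le_succ)).sub ((hXmeas k).const_smul η)
  have hv2 : ∀ n, MemLp (v n) 2 μ := by
    intro n
    induction n with
    | zero => exact hv02
    | succ k ih => rw [hrec k]; exact ih.sub ((hX2 k).const_smul η)
  intro s hs hsτ
  obtain ⟨r, rfl⟩ : ∃ r, s = r + 1 := ⟨s - 1, by omega⟩
  have hτ : (0 : ℝ) < 2 * τ - 1 := by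
    have : (1 : ℝ) ≤ τ := by exact_mod_cast (show 1 ≤ τ by omega)
    linarith
  have hstep := integral_norm_sub_smul_sub_sq_le (ℱ.le r) hLip (one_div_pos.2 hτ) η (hvm r)
    (hv0meas.mono (ℱ.mono r.zero_le)) (hv2 r) hv02 (hX2 r) (hX2 0) (hunbiased r) (hvar r) (hvar 0)
  rw [one_div, inv_inv] at hstep
  simp only [hrec r, Nat.add_sub_cancel]
  convert hstep using 2 <;> ring

/-- one-step recursion for the local drift of the personalized-adapter
iterates in the PE-MA algorithm. -/
theorem stmt6 {F : Type*}
    [NormedAddCommGroup F] [InnerProductSpace ℝ F] [FiniteDimensional ℝ F]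
    {Ω : Type*} {m0 : MeasurableSpace Ω} (μ : Measure Ω) [IsProbabilityMeasure μ]
    (ℱ : Filtration ℕ m0)
    (h : F → F) (L : ℝ) (hL : 0 < L) (hLip : ∀ a b, ‖h a - h b‖ ≤ L * ‖a - b‖)
    (σ η : ℝ) (hσ : 0 ≤ σ) (hη : 0 < η) (τ : ℕ) (hτ : 1 ≤ τ)
    (v X : ℕ → Ω → F)
    (hv0meas : StronglyMeasurable[ℱ 0] (v 0)) (hv02 : MemLp (v 0) 2 μ)
    (hrec : ∀ r : ℕ, v (r + 1) = fun ω => v r ω - η • X r ω)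
    (hX2 : ∀ r, MemLp (X r) 2 μ)
    (hXmeas : ∀ r, StronglyMeasurable[ℱ (r + 1)] (X r))
    (hunbiased : ∀ r, μ[X r|ℱ r] =ᵐ[μ] fun ω => h (v r ω))
    (hvar : ∀ r, ∫ ω, ‖X r ω - h (v r ω)‖ ^ 2 ∂μ ≤ σ ^ 2) :
    ∀ s : ℕ, 1 ≤ s → s ≤ τ →
      ∫ ω, ‖v s ω - v 0 ω‖ ^ 2 ∂μ ≤
        (1 + 1 / (2 * (τ : ℝ) - 1) + 6 * η ^ 2 * τ * L ^ 2)
            * ∫ ω, ‖v (s - 1) ω - v 0 ω‖ ^ 2 ∂μ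
          + (η ^ 2 + 6 * η ^ 2 * τ) * σ ^ 2
          + 6 * η ^ 2 * τ * ∫ ω, ‖X 0 ω‖ ^ 2 ∂μ :=
  stmt6_general μ ℱ h L hLip σ η τ v X hv0meas hv02 hrec hX2 hXmeas hunbiased hvar
end

section
/- Let N ≥ 2 and let P be an N×N doubly stochastic matrix (all entries nonnegative, every row and every column sums to 1) all of whose entries are at least p, where 0 < p < 1. Then for every integer k ≥ 1 and all indices i, j ∈ {1,…,N}: |1/N − (P^k)_{ij}| ≤ 2·((1 + p^{−N})/(1 − p^{N}))·(1 − p^{N})^{k/N}. -/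
/-!
Write `q = 1 - N p`. Since every entry of `P` is at least `p`, each row of `P` is `p` times the
all-ones row plus nonnegative weights of total mass `q`, so multiplying a vector by `P` shrinks the
spread of its entries by the factor `q`. Hence every column of `P ^ k` lies in an interval of
length `q ^ k`; as the column sums to one, that interval also contains its mean `1 / N`.
Finally `q ^ N ≤ q ≤ 1 - p ^ N` gives `q ^ k ≤ (1 - p ^ N) ^ (k / N)`, and the constant in
front is at least one.
-/

open Finset

namespace Matrix

variable {n R : Type*} [Fintype n]

section OrderedRing

variable [CommRing R] [LinearOrder R] [IsStrictOrderedRing R] {P : Matrix n n R} {p : R}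

theorem sum_mul_mem_Icc (hpP : ∀ i j, p ≤ P i j) (hProw : ∀ i, ∑ j, P i j = 1)
    {x : n → R} {a b : R} (hx : ∀ l, x l ∈ Set.Icc a b) (i : n) :
    ∑ l, P i l * x l ∈ Set.Icc ((1 - Fintype.card n * p) * a + p * ∑ l, x l)
      ((1 - Fintype.card n * p) * b + p * ∑ l, x l) := by
  have hsplit : ∑ l, P i l * x l = ∑ l, (P i l - p) * x l + p * ∑ l, x l := by
    rw [mul_sum, ← sum_add_distrib]
    exact sum_congr rfl fun l _ => by ring
  have hweights : ∑ l, (P i l - p) = 1 - Fintype.card n * p := by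
    rw [sum_sub_distrib, hProw, sum_const, card_univ, nsmul_eq_mul]
  have hw : ∀ l, 0 ≤ P i l - p := fun l => sub_nonneg.mpr (hpP i l)
  rw [hsplit, ← hweights, sum_mul, sum_mul]
  exact ⟨add_le_add_left (sum_le_sum fun l _ => mul_le_mul_of_nonneg_left (hx l).1 (hw l)) _,
    add_le_add_left (sum_le_sum fun l _ => mul_le_mul_of_nonneg_left (hx l).2 (hw l)) _⟩

theorem exists_pow_apply_mem_Icc [DecidableEq n] (hpP : ∀ i j, p ≤ P i j)
    (hProw : ∀ i, ∑ j, P i j = 1) (k : ℕ) (j : n) :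
    ∃ a, ∀ i, (P ^ k) i j ∈ Set.Icc a (a + (1 - Fintype.card n * p) ^ k) := by
  induction k with
  | zero => exact ⟨0, fun i => by by_cases h : i = j <;> simp [h]⟩
  | succ k ih =>
    obtain ⟨a, ha⟩ := ih
    refine ⟨(1 - Fintype.card n * p) * a + p * ∑ l, (P ^ k) l j, fun i => ?_⟩
    rw [pow_succ' P, mul_apply]
    convert sum_mul_mem_Icc hpP hProw ha i using 2
    ring

end OrderedRing

theorem sum_pow_apply_eq_one [DecidableEq n] [Semiring R] {P : Matrix n n R}
    (hPcol : ∀ j, ∑ i, P i j = 1) (k : ℕ) (j : n) : ∑ i, (P ^ k) i j = 1 := by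
  induction k generalizing j with
  | zero => simp [one_apply]
  | succ k ih =>
    simp only [pow_succ, mul_apply]
    rw [sum_comm]
    simp only [← sum_mul, ih, one_mul, hPcol]

theorem abs_inv_card_sub_pow_apply_le [DecidableEq n] [Field R] [LinearOrder R]
    [IsStrictOrderedRing R] {P : Matrix n n R} {p : R} (hpP : ∀ i j, p ≤ P i j)
    (hProw : ∀ i, ∑ j, P i j = 1) (hPcol : ∀ j, ∑ i, P i j = 1) (k : ℕ) (i j : n) :
    |(Fintype.card n : R)⁻¹ - (P ^ k) i j| ≤ (1 - Fintype.card n * p) ^ k := by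
  obtain ⟨a, ha⟩ := exists_pow_apply_mem_Icc hpP hProw k j
  have hcard : (0 : R) < Fintype.card n := by exact_mod_cast Fintype.card_pos_iff.mpr ⟨i⟩
  have hmean : (Fintype.card n : R)⁻¹ ∈ Set.Icc a (a + (1 - Fintype.card n * p) ^ k) := by
    have hsum := sum_pow_apply_eq_one hPcol k j
    have hlow := card_nsmul_le_sum univ (fun l => (P ^ k) l j) a fun l _ => (ha l).1
    have hupp := sum_le_card_nsmul univ (fun l => (P ^ k) l j) _ fun l _ => (ha l).2
    rw [card_univ, nsmul_eq_mul, hsum] at hlow hupp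
    exact ⟨by simpa using (le_inv_mul_iff₀ hcard).mpr hlow,
      by simpa using (inv_mul_le_iff₀ hcard).mpr hupp⟩
  simpa using abs_sub_le_of_le_of_le hmean.1 hmean.2 (ha i).1 (ha i).2

end Matrix

theorem pow_le_rpow_div_of_pow_le {q r : ℝ} {N : ℕ} (hq : 0 ≤ q) (hN : N ≠ 0)
    (h : q ^ N ≤ r) (k : ℕ) : q ^ k ≤ r ^ ((k : ℝ) / N) := by
  calc q ^ k = (q ^ N) ^ ((k : ℝ) / N) := by
        rw [← Real.rpow_natCast q N, ← Real.rpow_mul hq,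
          mul_div_cancel₀ _ (by exact_mod_cast hN), Real.rpow_natCast]
    _ ≤ r ^ ((k : ℝ) / N) := Real.rpow_le_rpow (pow_nonneg hq N) h (by positivity)

theorem stmt8_general (N : ℕ) (P : Matrix (Fin N) (Fin N) ℝ)
    (hProw : ∀ i, ∑ j, P i j = 1) (hPcol : ∀ j, ∑ i, P i j = 1)
    (p : ℝ) (hp0 : 0 < p) (hp1 : p < 1) (hpP : ∀ i j, p ≤ P i j) :
    ∀ k : ℕ, 1 ≤ k → ∀ i j : Fin N,
      |1 / (N : ℝ) - (P ^ k) i j| ≤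
        2 * ((1 + p ^ (-(N : ℝ))) / (1 - p ^ N)) * (1 - p ^ N) ^ ((k : ℝ) / (N : ℝ)) := by
  intro k _ i j
  have hN : 0 < N := i.pos
  have hNp : N * p ≤ 1 := by
    simpa [hProw i] using card_nsmul_le_sum univ (P i) p fun l _ => hpP i l
  have hpN : p ^ N ≤ N * p := (pow_le_of_le_one hp0.le hp1.le hN.ne').trans
    (le_mul_of_one_le_left hp0.le (by exact_mod_cast hN))
  have hq : (1 - N * p) ^ N ≤ 1 - p ^ N :=
    (pow_le_of_le_one (by linarith) (sub_le_self _ (by positivity)) hN.ne').trans (by linarith)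
  have hC : 1 ≤ 2 * ((1 + p ^ (-(N : ℝ))) / (1 - p ^ N)) := by
    have hpN1 : 0 < 1 - p ^ N := sub_pos.mpr (pow_lt_one₀ hp0.le hp1 hN.ne')
    have : 1 ≤ (1 + p ^ (-(N : ℝ))) / (1 - p ^ N) := by
      rw [le_div_iff₀ hpN1]
      linarith [Real.rpow_nonneg hp0.le (-(N : ℝ)), pow_pos hp0 N]
    linarith
  calc |1 / (N : ℝ) - (P ^ k) i j| ≤ (1 - N * p) ^ k := by
        simpa using Matrix.abs_inv_card_sub_pow_apply_le hpP hProw hPcol k i j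
    _ ≤ (1 - p ^ N) ^ ((k : ℝ) / N) := pow_le_rpow_div_of_pow_le (by linarith) hN.ne' hq k
    _ ≤ _ := le_mul_of_one_le_left (Real.rpow_nonneg (by linarith) _) hC

/-- Nedić–Ozdaglar geometric mixing bound for powers of a doubly
stochastic matrix with entries bounded below by `p`. -/
theorem stmt8 (N : ℕ) (hN : 2 ≤ N) (P : Matrix (Fin N) (Fin N) ℝ)
    (hPnn : ∀ i j, 0 ≤ P i j)
    (hProw : ∀ i, ∑ j, P i j = 1) (hPcol : ∀ j, ∑ i, P i j = 1)
    (p : ℝ) (hp0 : 0 < p) (hp1 : p < 1) (hpP : ∀ i j, p ≤ P i j) :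
    ∀ k : ℕ, 1 ≤ k → ∀ i j : Fin N,
      |1 / (N : ℝ) - (P ^ k) i j| ≤
        2 * ((1 + p ^ (-(N : ℝ))) / (1 - p ^ N)) * (1 - p ^ N) ^ ((k : ℝ) / (N : ℝ)) :=
  stmt8_general N P hProw hPcol p hp0 hp1 hpP
end

section
/- Let N ≥ 1, let P be an N×N doubly stochastic matrix, let V be a real normed space, η ∈ ℝ, and suppose all initial vectors are equal: w_1(0) = … = w_N(0) ∈ V. Let g_j(r) ∈ V for j ∈ {1,…,N}, r ≥ 0, and define w_i(t+1) := ∑_{j=1}^N P_{ij}·(w_j(t) − η g_j(t)) and w̄(t) := (1/N)∑_{j=1}^N w_j(t). Assume there are constants D ≥ 0 and q ∈ [0,1) with |(P^m)_{ij} − 1/N| ≤ D·q^m for all integers m ≥ 1 and all i, j. Then for every k ≥ 1 and every i: ‖w_i(k) − w̄(k)‖ ≤ |η|·D·∑_{r=0}^{k−1} q^{k−r}·∑_{j=1}^N ‖g_j(r)‖. -/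
/-!
Unrolling the recursion, `w k = Pᵏ w₀ - η ∑_{r<k} P^{k-r} g_r`. The averaging matrix `J` with
all entries `1/N` satisfies `J P = J` (columns of `P` sum to one), so
`w k - J w k = (Pᵏ - J) w₀ - η ∑_{r<k} (P^{k-r} - J) g_r`. Rows of both `Pᵏ` and `J` sum to one,
so `Pᵏ - J` kills the constant vector `w₀`, and each remaining term is bounded entrywise by the
mixing hypothesis.
-/

open Finset

theorem mul_pow_eq_self_of_mul_eq_self {G : Type*} [Monoid G] {a b : G} (h : a * b = a) (m : ℕ) :
    a * b ^ m = a := by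
  induction m with
  | zero => rw [pow_zero, mul_one]
  | succ m ih => rw [pow_succ, ← mul_assoc, ih, h]

namespace Matrix

variable {n R : Type*} [Fintype n] [DecidableEq n] [CommSemiring R]

variable (M : Type*) [AddCommMonoid M] [Module R M] in
def toPiEnd : Matrix n n R →+* Module.End R (n → M) where
  toFun A :=
    { toFun := fun v i => ∑ j, A i j • v j
      map_add' := fun v w => by ext i; simp [smul_add, sum_add_distrib]
      map_smul' := fun c v => by ext i; simp [smul_sum, smul_comm c] }
  map_one' := LinearMap.ext fun v => funext fun i => by simp [one_apply]
  map_mul' := fun A B => LinearMap.ext fun v => funext fun i => by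
    simp only [LinearMap.coe_mk, AddHom.coe_mk, mul_apply, sum_smul, mul_smul,
      Module.End.mul_apply, smul_sum]
    exact sum_comm
  map_zero' := LinearMap.ext fun v => funext fun i => by simp
  map_add' := fun A B => LinearMap.ext fun v => funext fun i => by
    simp [add_smul, sum_add_distrib]

variable {M : Type*} [AddCommMonoid M] [Module R M]

@[simp]
theorem toPiEnd_apply (A : Matrix n n R) (v : n → M) (i : n) :
    toPiEnd M A v i = ∑ j, A i j • v j :=
  rfl

theorem toPiEnd_apply_const_of_sum_row_eq_one {A : Matrix n n R} (hA : ∀ i, ∑ j, A i j = 1)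
    (c : M) : toPiEnd M A (fun _ => c) = fun _ => c := by
  ext i
  simp [← sum_smul, hA]

theorem norm_toPiEnd_apply_le {𝕜 E : Type*} [NormedField 𝕜] [SeminormedAddCommGroup E]
    [NormedSpace 𝕜 E] {A : Matrix n n 𝕜} {i : n} {C : ℝ} (hA : ∀ j, ‖A i j‖ ≤ C) (v : n → E) :
    ‖toPiEnd E A v i‖ ≤ C * ∑ j, ‖v j‖ := by
  rw [toPiEnd_apply, mul_sum]
  refine (norm_sum_le _ _).trans (sum_le_sum fun j _ => ?_)
  rw [norm_smul]
  exact mul_le_mul_of_nonneg_right (hA j) (norm_nonneg _)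

end Matrix

namespace Module.End

variable {R M : Type*} [Semiring R] [AddCommGroup M] [Module R M]

theorem eq_pow_apply_sub_sum_of_recursion (L : End R M) {x u : ℕ → M}
    (hx : ∀ t, x (t + 1) = L (x t - u t)) (k : ℕ) :
    x k = (L ^ k) (x 0) - ∑ r ∈ range k, (L ^ (k - r)) (u r) := by
  induction k with
  | zero => simp
  | succ k ih =>
    have hpow : ∀ r ∈ range k, L ((L ^ (k - r)) (u r)) = (L ^ (k + 1 - r)) (u r) := by
      intro r hr
      rw [Nat.sub_add_comm (mem_range.mp hr).le, pow_succ', mul_apply]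
    rw [hx, ih, sum_range_succ, Nat.add_sub_cancel_left, pow_one, map_sub, map_sub, map_sum,
      sum_congr rfl hpow, pow_succ', mul_apply]
    abel

theorem sub_apply_eq_of_recursion {L J : End R M} (hJL : J * L = J) {x u : ℕ → M}
    (hx : ∀ t, x (t + 1) = L (x t - u t)) (k : ℕ) :
    x k - J (x k) = (L ^ k - J) (x 0) - ∑ r ∈ range k, (L ^ (k - r) - J) (u r) := by
  rw [eq_pow_apply_sub_sum_of_recursion L hx k, map_sub, map_sum]
  simp only [← mul_apply, mul_pow_eq_self_of_mul_eq_self hJL, LinearMap.sub_apply,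
    sum_sub_distrib]
  abel

end Module.End

open Matrix Module.End in
theorem stmt10_general {V : Type*} [NormedAddCommGroup V] [NormedSpace ℝ V]
    (N : ℕ) (hN : 1 ≤ N) (P : Matrix (Fin N) (Fin N) ℝ)
    (hProw : ∀ i, ∑ j, P i j = 1) (hPcol : ∀ j, ∑ i, P i j = 1)
    (η : ℝ) (w : ℕ → Fin N → V) (g : ℕ → Fin N → V)
    (hinit : ∀ i j, w 0 i = w 0 j)
    (hrec : ∀ t i, w (t + 1) i = ∑ j, P i j • (w t j - η • g t j))
    (wbar : ℕ → V) (hwbar : ∀ t, wbar t = (N : ℝ)⁻¹ • ∑ j, w t j)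
    (D q : ℝ)
    (hmix : ∀ m : ℕ, 1 ≤ m → ∀ i j, |(P ^ m) i j - 1 / (N : ℝ)| ≤ D * q ^ m) :
    ∀ k : ℕ, 1 ≤ k → ∀ i,
      ‖w k i - wbar k‖ ≤
        |η| * D * ∑ r ∈ Finset.range k, q ^ (k - r) * ∑ j, ‖g r j‖ := by
  intro k _ i
  let J : Matrix (Fin N) (Fin N) ℝ := of fun _ _ => 1 / (N : ℝ)
  have hJ_row : ∀ i, ∑ j, J i j = 1 := fun i => by
    have : (N : ℝ) ≠ 0 := by positivity
    simp [J, this]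
  have hJP : J * P = J := by
    ext i j
    simp [J, Matrix.mul_apply, ← mul_sum, hPcol]
  have hw : ∀ t, w (t + 1) = toPiEnd V P (w t - η • g t) := fun t => funext (hrec t)
  have hwbar_eq : ∀ t, wbar t = toPiEnd V J (w t) i := fun t => by
    simp [J, hwbar, smul_sum]
  have hw0 : (toPiEnd V P ^ k - toPiEnd V J) (w 0) = 0 := by
    have hconst : w 0 = fun _ => w 0 i := funext fun j => hinit j i
    rw [hconst, LinearMap.sub_apply, pow_apply,
      Function.IsFixedPt.iterate (toPiEnd_apply_const_of_sum_row_eq_one hProw _),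
      toPiEnd_apply_const_of_sum_row_eq_one hJ_row, sub_self]
  have hdev := sub_apply_eq_of_recursion (by rw [← map_mul, hJP]) hw k
  rw [hw0, zero_sub] at hdev
  have hentry : ∀ r ∈ range k, ∀ j, ‖(P ^ (k - r) - J) i j‖ ≤ D * q ^ (k - r) :=
    fun r hr => hmix _ (by have := mem_range.mp hr; omega) i
  rw [hwbar_eq, ← Pi.sub_apply, hdev, Pi.neg_apply, norm_neg, Finset.sum_apply, mul_sum]
  refine (norm_sum_le _ _).trans (sum_le_sum fun r hr => ?_)
  rw [← map_pow, ← map_sub]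
  refine (norm_toPiEnd_apply_le (hentry r hr) _).trans_eq ?_
  simp only [Pi.smul_apply, norm_smul, ← mul_sum, Real.norm_eq_abs]
  ring

/-- norm bound on the consensus deviation of the gossip/gradient
recursion under a geometric mixing bound, with equal initialization. -/
theorem stmt10 {V : Type*} [NormedAddCommGroup V] [NormedSpace ℝ V]
    (N : ℕ) (hN : 1 ≤ N) (P : Matrix (Fin N) (Fin N) ℝ)
    (hPnn : ∀ i j, 0 ≤ P i j)
    (hProw : ∀ i, ∑ j, P i j = 1) (hPcol : ∀ j, ∑ i, P i j = 1)
    (η : ℝ) (w : ℕ → Fin N → V) (g : ℕ → Fin N → V)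
    (hinit : ∀ i j, w 0 i = w 0 j)
    (hrec : ∀ t i, w (t + 1) i = ∑ j, P i j • (w t j - η • g t j))
    (wbar : ℕ → V) (hwbar : ∀ t, wbar t = (N : ℝ)⁻¹ • ∑ j, w t j)
    (D q : ℝ) (hD : 0 ≤ D) (hq0 : 0 ≤ q) (hq1 : q < 1)
    (hmix : ∀ m : ℕ, 1 ≤ m → ∀ i j, |(P ^ m) i j - 1 / (N : ℝ)| ≤ D * q ^ m) :
    ∀ k : ℕ, 1 ≤ k → ∀ i,
      ‖w k i - wbar k‖ ≤
        |η| * D * ∑ r ∈ Finset.range k, q ^ (k - r) * ∑ j, ‖g r j‖ :=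
  stmt10_general N hN P hProw hPcol η w g hinit hrec wbar hwbar D q hmix
end

section
/- Let q ∈ (0,1), α, β, γ ≥ 0 with α/(1−q) < 1, let K ≥ 1 be an integer, and let A_0, …, A_{K−1} and B_0, …, B_{K−1} be nonnegative real numbers with A_0 = 0 and, for every 1 ≤ k ≤ K−1, A_k ≤ α·∑_{r=0}^{k−1} q^{k−r}·A_r + β·∑_{r=0}^{k−1} q^{k−r}·B_r + γ. Then ∑_{k=0}^{K−1} A_k ≤ ( (β/(1−q))·∑_{r=0}^{K−1} B_r + (K−1)·γ ) / (1 − α/(1−q)). -/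
/-!
Summing the recursion over `1 ≤ k < K` and exchanging the order of the double sums, each `A r`
and `B r` is weighted by the geometric tail `∑_{k > r} q^(k - r) ≤ q / (1 - q) ≤ 1 / (1 - q)`.
Hence `S = ∑ A_k` satisfies `S ≤ α / (1 - q) · S + β / (1 - q) · ∑ B_r + (K - 1) γ`, and since
`α / (1 - q) < 1` this solves to the claimed bound.
-/

open Finset

lemma sum_range_eq_sum_Ico_one {M : Type*} [AddCommMonoid M] {f : ℕ → M} (hf : f 0 = 0)
    (n : ℕ) : ∑ k ∈ range n, f k = ∑ k ∈ Ico 1 n, f k := by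
  rcases Nat.eq_zero_or_pos n with rfl | hn
  · rfl
  · rw [sum_range_eq_add_Ico f hn, hf, zero_add]

lemma sum_Ico_pow_sub_le {q : ℝ} (hq0 : 0 ≤ q) (hq1 : q < 1) (r n : ℕ) :
    ∑ k ∈ Ico (r + 1) n, q ^ (k - r) ≤ q / (1 - q) := by
  calc ∑ k ∈ Ico (r + 1) n, q ^ (k - r) = ∑ i ∈ Ico 1 (n - r), q ^ i := by
        rw [sum_Ico_eq_sum_range, sum_Ico_eq_sum_range, Nat.sub_sub, add_comm r 1]
        refine sum_congr rfl fun j _ => ?_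
        congr 1
        omega
    _ ≤ q ^ 1 / (1 - q) := geom_sum_Ico_le_of_lt_one hq0 hq1
    _ = q / (1 - q) := by rw [pow_one]

/-- Young's inequality for the convolution of a nonnegative sequence with `(q ^ j)_{j ≥ 1}`. -/
lemma sum_range_geom_convolution_le {q : ℝ} (hq0 : 0 ≤ q) (hq1 : q < 1) (n : ℕ) {C : ℕ → ℝ}
    (hC : ∀ r < n, 0 ≤ C r) :
    ∑ k ∈ range n, ∑ r ∈ range k, q ^ (k - r) * C r ≤ q / (1 - q) * ∑ r ∈ range n, C r := by
  have hswap : ∑ k ∈ range n, ∑ r ∈ range k, q ^ (k - r) * C r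
      = ∑ r ∈ range n, (∑ k ∈ Ico (r + 1) n, q ^ (k - r)) * C r := by
    simp only [range_eq_Ico, sum_mul]
    exact (sum_Ico_Ico_comm' 0 n fun r k => q ^ (k - r) * C r).symm
  rw [hswap, mul_sum]
  refine sum_le_sum fun r hr => ?_
  exact mul_le_mul_of_nonneg_right (sum_Ico_pow_sub_le hq0 hq1 r n) (hC r (mem_range.mp hr))

theorem stmt13_general (q : ℝ) (hq0 : 0 < q) (hq1 : q < 1)
    (α β γ : ℝ) (hα : 0 ≤ α) (hβ : 0 ≤ β) (hαq : α / (1 - q) < 1)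
    (K : ℕ) (hK : 1 ≤ K) (A B : ℕ → ℝ)
    (hA0 : A 0 = 0) (hAnn : ∀ k < K, 0 ≤ A k) (hBnn : ∀ k < K, 0 ≤ B k)
    (hrec : ∀ k : ℕ, 1 ≤ k → k ≤ K - 1 →
      A k ≤ α * ∑ r ∈ Finset.range k, q ^ (k - r) * A r
        + β * ∑ r ∈ Finset.range k, q ^ (k - r) * B r + γ) :
    ∑ k ∈ Finset.range K, A k ≤
      ((β / (1 - q)) * ∑ r ∈ Finset.range K, B r + ((K : ℝ) - 1) * γ)
        / (1 - α / (1 - q)) := by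
  have h1q : 0 < 1 - q := sub_pos.mpr hq1
  have hconv : ∀ C : ℕ → ℝ, (∀ r < K, 0 ≤ C r) →
      ∑ k ∈ Ico 1 K, ∑ r ∈ range k, q ^ (k - r) * C r ≤ 1 / (1 - q) * ∑ r ∈ range K, C r := by
    intro C hC
    rw [← sum_range_eq_sum_Ico_one (by rw [range_zero, sum_empty])]
    calc _ ≤ q / (1 - q) * ∑ r ∈ range K, C r := sum_range_geom_convolution_le hq0.le hq1 K hC
      _ ≤ 1 / (1 - q) * ∑ r ∈ range K, C r :=
        mul_le_mul_of_nonneg_right (div_le_div_of_nonneg_right hq1.le h1q.le)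
          (sum_nonneg fun r hr => hC r (mem_range.mp hr))
  have hsum : ∑ k ∈ range K, A k ≤ α * ∑ k ∈ Ico 1 K, ∑ r ∈ range k, q ^ (k - r) * A r
      + β * ∑ k ∈ Ico 1 K, ∑ r ∈ range k, q ^ (k - r) * B r + ((K : ℝ) - 1) * γ := by
    calc _ = ∑ k ∈ Ico 1 K, A k := sum_range_eq_sum_Ico_one hA0 K
      _ ≤ ∑ k ∈ Ico 1 K, (α * ∑ r ∈ range k, q ^ (k - r) * A r
          + β * ∑ r ∈ range k, q ^ (k - r) * B r + γ) :=
          sum_le_sum fun k hk => hrec k (mem_Ico.mp hk).1 (Nat.le_sub_one_of_lt (mem_Ico.mp hk).2)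
      _ = _ := by
        rw [sum_add_distrib, sum_add_distrib, ← mul_sum, ← mul_sum, sum_const, Nat.card_Ico,
          nsmul_eq_mul, Nat.cast_sub hK, Nat.cast_one]
  have hA := mul_le_mul_of_nonneg_left (hconv A hAnn) hα
  have hB := mul_le_mul_of_nonneg_left (hconv B hBnn) hβ
  rw [le_div_iff₀ (sub_pos.mpr hαq)]
  linear_combination hsum + hA + hB

/-- resolution of the geometrically weighted consensus-error recursion. -/
theorem stmt13 (q : ℝ) (hq0 : 0 < q) (hq1 : q < 1)
    (α β γ : ℝ) (hα : 0 ≤ α) (hβ : 0 ≤ β) (hγ : 0 ≤ γ) (hαq : α / (1 - q) < 1)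
    (K : ℕ) (hK : 1 ≤ K) (A B : ℕ → ℝ)
    (hA0 : A 0 = 0) (hAnn : ∀ k < K, 0 ≤ A k) (hBnn : ∀ k < K, 0 ≤ B k)
    (hrec : ∀ k : ℕ, 1 ≤ k → k ≤ K - 1 →
      A k ≤ α * ∑ r ∈ Finset.range k, q ^ (k - r) * A r
        + β * ∑ r ∈ Finset.range k, q ^ (k - r) * B r + γ) :
    ∑ k ∈ Finset.range K, A k ≤
      ((β / (1 - q)) * ∑ r ∈ Finset.range K, B r + ((K : ℝ) - 1) * γ)
        / (1 - α / (1 - q)) :=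
  stmt13_general q hq0 hq1 α β γ hα hβ hαq K hK A B hA0 hAnn hBnn hrec
end

section
/- Let N ≥ 1, let E and F be finite-dimensional real inner product spaces, and for i = 1,…,N let L_i : E × F → ℝ be differentiable with ‖∇_w L_i(w,v) − ∇_w L_i(w′,v)‖ ≤ L‖w − w′‖ for all w, w′ ∈ E, v ∈ F (L > 0), and satisfying the global variability bound: for all w ∈ E and v_1,…,v_N ∈ F, (1/N)∑_{i=1}^N ‖∇_w L_i(w,v_i) − (1/N)∑_{j=1}^N ∇_w L_j(w,v_j)‖² ≤ ς². Let P be an N×N doubly stochastic matrix and suppose there are C > 0 and q ∈ (0,1) with |(P^m)_{ij} − 1/N| ≤ (C/(2√2))·q^m for all m ≥ 1 and all i, j. On a probability space, let w_j(t), v_j(t) (j ∈ {1,…,N}, t ≥ 0) and g_j(t) be square-integrable random vectors (values in E, F, E respectively) such that w_1(0) = … = w_N(0) almost surely, the recursion w_i(t+1) = ∑_{j=1}^N P_{ij}·(w_j(t) − η_w·g_j(t)) holds for some η_w > 0, and E‖g_j(t) − ∇_w L_j(w_j(t), v_j(t+1))‖² ≤ σ₁² for all j, t. Set w̄(t) :=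 (1/N)∑_j w_j(t) and ∇_w L(w,{v_j}) := (1/N)∑_j ∇_w L_j(w, v_j). Then for every k ≥ 1 and every i: E‖w_i(k) − w̄(k)‖² ≤ 6η_w²C²N²σ₁²/(1−q)² + 18η_w²C²N²ς²/(1−q)² + (18η_w²C²L²N/(1−q))·∑_{r=0}^{k−1} q^{k−r}·∑_{j=1}^N E‖w_j(r) − w̄(r)‖² + (18η_w²C²N²/(1−q))·∑_{r=0}^{k−1} q^{k−r}·E‖∇_w L(w̄(r), {v_j(r+1)}_{j=1}^N)‖². -/
/-!
Unrolling the recursion, and using that `P` is doubly stochastic and that the agents start in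
consensus, gives `w_i(k) - w̄(k) = -η ∑_{r<k} ∑_j ((P^{k-r})_{ij} - 1/N) g_j(r)`. The weights sum
to zero over `j`, so `g_j(r)` may be replaced by its deviation from the mean gradient
`(1/N) ∑_l ∇_w L_l(w̄(r), v_l(r+1))`, which splits into the gradient noise, a Lipschitz term
`L ‖w_j(r) - w̄(r)‖` and a heterogeneity term of mean square at most `ς²`. The mixing bound and a
Cauchy–Schwarz inequality with weights `q^{k-r}`, whose sum is at most `1/(1-q)`, bound the squared
consensus error pointwise; taking expectations gives the claim. The gradient terms are square
integrable because for `N ≥ 2` the variability bound forces `‖∇_w L_j(w, v)‖` to grow at most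
linearly in `‖w‖`, uniformly in `v`.
-/

open MeasureTheory Finset

theorem sum_range_pow_sub_le {q : ℝ} (hq0 : 0 ≤ q) (hq1 : q < 1) (k : ℕ) :
    ∑ r ∈ range k, q ^ (k - r) ≤ (1 - q)⁻¹ := by
  have hshift : ∑ r ∈ range k, q ^ (k - r) = ∑ r ∈ range k, q ^ (r + 1) := by
    rw [← sum_range_reflect]
    refine sum_congr rfl fun r hr => ?_
    rw [mem_range] at hr
    congr 1
    omega
  calc ∑ r ∈ range k, q ^ (k - r) ≤ ∑ r ∈ range (k + 1), q ^ r := by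
        rw [hshift, sum_range_succ' (q ^ ·)]
        exact le_add_of_nonneg_right (by positivity)
    _ ≤ q ^ 0 / (1 - q) := by
        rw [range_eq_Ico]
        exact geom_sum_Ico_le_of_lt_one hq0 hq1
    _ = (1 - q)⁻¹ := by rw [pow_zero, one_div]

theorem sum_range_pow_sub_mul_add_le {q X : ℝ} (hq0 : 0 ≤ q) (hq1 : q < 1) (hX : 0 ≤ X)
    (M : ℝ) (Y : ℕ → ℝ) (k : ℕ) :
    ∑ r ∈ range k, q ^ (k - r) * (X + M * Y r) ≤
      X / (1 - q) + M * ∑ r ∈ range k, q ^ (k - r) * Y r := by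
  have hsplit : ∑ r ∈ range k, q ^ (k - r) * (X + M * Y r)
      = X * ∑ r ∈ range k, q ^ (k - r) + M * ∑ r ∈ range k, q ^ (k - r) * Y r := by
    rw [mul_sum, mul_sum, ← sum_add_distrib]
    exact sum_congr rfl fun r _ => by ring
  rw [hsplit, div_eq_mul_inv]
  gcongr
  exact sum_range_pow_sub_le hq0 hq1 k

theorem sq_norm_add₃_le {E : Type*} [SeminormedAddCommGroup E] (a b c : E) :
    ‖a + b + c‖ ^ 2 ≤ 3 * (‖a‖ ^ 2 + ‖b‖ ^ 2 + ‖c‖ ^ 2) := by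
  have := pow_le_pow_left₀ (norm_nonneg _) (norm_add₃_le (a := a) (b := b) (c := c)) 2
  nlinarith [sq_nonneg (‖a‖ - ‖b‖), sq_nonneg (‖a‖ - ‖c‖), sq_nonneg (‖b‖ - ‖c‖)]

theorem sq_norm_sum_sum_smul_le {ι κ E : Type*} [SeminormedAddCommGroup E] [NormedSpace ℝ E]
    (s : Finset ι) (t : Finset κ) (a : ι → κ → ℝ) (u : ι → κ → E) (c : ι → ℝ) (b : ℝ)
    (hc : ∀ r ∈ s, 0 ≤ c r) (ha : ∀ r ∈ s, ∀ j ∈ t, |a r j| ≤ b * c r) :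
    ‖∑ r ∈ s, ∑ j ∈ t, a r j • u r j‖ ^ 2 ≤
      b ^ 2 * #t * (∑ r ∈ s, c r) * ∑ r ∈ s, c r * ∑ j ∈ t, ‖u r j‖ ^ 2 := by
  set X := ∑ r ∈ s, c r * ∑ j ∈ t, ‖u r j‖
  have hX : ‖∑ r ∈ s, ∑ j ∈ t, a r j • u r j‖ ≤ b * X := calc
    _ ≤ ∑ r ∈ s, ∑ j ∈ t, ‖a r j • u r j‖ :=
        (norm_sum_le _ _).trans (sum_le_sum fun r _ => norm_sum_le _ _)
    _ ≤ ∑ r ∈ s, ∑ j ∈ t, b * c r * ‖u r j‖ := by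
        gcongr with r hr j hj
        rw [norm_smul, Real.norm_eq_abs]
        exact mul_le_mul_of_nonneg_right (ha r hr j hj) (norm_nonneg _)
    _ = b * X := by simp only [X, mul_sum, mul_assoc]
  have hXsq : X ^ 2 ≤ (∑ r ∈ s, c r) * ∑ r ∈ s, c r * (#t * ∑ j ∈ t, ‖u r j‖ ^ 2) := by
    refine sum_sq_le_sum_mul_sum_of_sq_le_mul s hc (fun r hr => by positivity [hc r hr]) ?_
    intro r hr
    rw [mul_pow, sq (c r), mul_assoc]
    exact mul_le_mul_of_nonneg_left
      (mul_le_mul_of_nonneg_left sq_sum_le_card_mul_sum_sq (hc r hr)) (hc r hr)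
  calc ‖∑ r ∈ s, ∑ j ∈ t, a r j • u r j‖ ^ 2 ≤ b ^ 2 * X ^ 2 := by
        rw [← mul_pow]; exact pow_le_pow_left₀ (norm_nonneg _) hX 2
    _ ≤ b ^ 2 * ((∑ r ∈ s, c r) * ∑ r ∈ s, c r * (#t * ∑ j ∈ t, ‖u r j‖ ^ 2)) := by gcongr
    _ = b ^ 2 * #t * (∑ r ∈ s, c r) * ∑ r ∈ s, c r * ∑ j ∈ t, ‖u r j‖ ^ 2 := by
        simp only [mul_left_comm _ (#t : ℝ), ← mul_sum]; ring

theorem norm_sub_le_of_mean_sq_dev_le {E : Type*} [SeminormedAddCommGroup E] [NormedSpace ℝ E]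
    {N : ℕ} (x : Fin N → E) {ς : ℝ}
    (h : (N : ℝ)⁻¹ * ∑ i, ‖x i - (N : ℝ)⁻¹ • ∑ j, x j‖ ^ 2 ≤ ς ^ 2) (i l : Fin N) :
    ‖x i - x l‖ ≤ 2 * (√N * |ς|) := by
  set m := (N : ℝ)⁻¹ • ∑ j, x j
  have hN : (0 : ℝ) < N := by exact_mod_cast i.pos
  have hdev : ∀ i, ‖x i - m‖ ≤ √N * |ς| := by
    intro i
    rw [← Real.sqrt_sq_eq_abs, ← Real.sqrt_mul hN.le, Real.le_sqrt (norm_nonneg _) (by positivity)]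
    exact (single_le_sum (fun j _ => sq_nonneg ‖x j - m‖) (mem_univ i)).trans
      ((inv_mul_le_iff₀ hN).1 h)
  calc ‖x i - x l‖ = ‖(x i - m) - (x l - m)‖ := by rw [sub_sub_sub_cancel_right]
    _ ≤ ‖x i - m‖ + ‖x l - m‖ := norm_sub_le _ _
    _ ≤ 2 * (√N * |ς|) := by linarith [hdev i, hdev l]

/-- The paper's global variability bound on the partial gradients `G i`. -/
def HasVariabilityBound {E F : Type*} [SeminormedAddCommGroup E] [NormedSpace ℝ E] {N : ℕ}
    (G : Fin N → E → F → E) (ς : ℝ) : Prop :=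
  ∀ (w : E) (v : Fin N → F),
    (N : ℝ)⁻¹ * ∑ i, ‖G i w (v i) - (N : ℝ)⁻¹ • ∑ j, G j w (v j)‖ ^ 2 ≤ ς ^ 2

theorem exists_norm_le_add_mul_norm_of_hasVariabilityBound {E F : Type*} [SeminormedAddCommGroup E]
    [NormedSpace ℝ E] [Zero F] {N : ℕ} (hN : 2 ≤ N) (G : Fin N → E → F → E) {L ς : ℝ}
    (hLip : ∀ i (w w' : E) (v : F), ‖G i w v - G i w' v‖ ≤ L * ‖w - w'‖)
    (hvar : HasVariabilityBound G ς) (j : Fin N) :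
    ∃ K, ∀ w v, ‖G j w v‖ ≤ K + L * ‖w‖ := by
  have : Nontrivial (Fin N) := Fin.nontrivial_iff_two_le.2 hN
  obtain ⟨l, hl⟩ := exists_ne j
  refine ⟨‖G l 0 0‖ + 2 * (√N * |ς|), fun w v => ?_⟩
  have hjl : ‖G j w v - G l w 0‖ ≤ 2 * (√N * |ς|) := by
    have := norm_sub_le_of_mean_sq_dev_le (fun m => G m w (if m = j then v else 0))
      (hvar w _) j l
    simpa [hl] using this
  have hw : ‖G l w 0 - G l 0 0‖ ≤ L * ‖w‖ := by simpa using hLip l w 0 0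
  calc ‖G j w v‖ = ‖G l 0 0 + (G j w v - G l w 0) + (G l w 0 - G l 0 0)‖ := by abel_nf
    _ ≤ ‖G l 0 0‖ + ‖G j w v - G l w 0‖ + ‖G l w 0 - G l 0 0‖ := norm_add₃_le
    _ ≤ ‖G l 0 0‖ + 2 * (√N * |ς|) + L * ‖w‖ := by linarith

theorem sum_sq_norm_sub_mean_gradient_le {E F : Type*} [SeminormedAddCommGroup E] [NormedSpace ℝ E]
    {N : ℕ} (hN : 0 < N) (G : Fin N → E → F → E) {L ς : ℝ}
    (hLip : ∀ i (w w' : E) (v : F), ‖G i w v - G i w' v‖ ≤ L * ‖w - w'‖)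
    (hvar : HasVariabilityBound G ς)
    (g w : Fin N → E) (v : Fin N → F) (x : E) :
    ∑ j, ‖g j - (N : ℝ)⁻¹ • ∑ l, G l x (v l)‖ ^ 2 ≤
      3 * (∑ j, ‖g j - G j (w j) (v j)‖ ^ 2 + N * ς ^ 2 + L ^ 2 * ∑ j, ‖w j - x‖ ^ 2) := by
  set m := (N : ℝ)⁻¹ • ∑ l, G l x (v l)
  have hdev : ∑ j, ‖G j x (v j) - m‖ ^ 2 ≤ N * ς ^ 2 :=
    (inv_mul_le_iff₀ (by exact_mod_cast hN)).1 (hvar x v)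
  have hsplit : ∀ j, ‖g j - m‖ ^ 2 ≤
      3 * (‖g j - G j (w j) (v j)‖ ^ 2 + ‖G j x (v j) - m‖ ^ 2 + L ^ 2 * ‖w j - x‖ ^ 2) := by
    intro j
    have hlip : ‖G j (w j) (v j) - G j x (v j)‖ ^ 2 ≤ L ^ 2 * ‖w j - x‖ ^ 2 := by
      rw [← mul_pow]; exact pow_le_pow_left₀ (norm_nonneg _) (hLip j _ _ _) 2
    calc ‖g j - m‖ ^ 2 = ‖(g j - G j (w j) (v j)) + (G j x (v j) - m)
          + (G j (w j) (v j) - G j x (v j))‖ ^ 2 := by congr 2; abel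
      _ ≤ _ := sq_norm_add₃_le _ _ _
      _ ≤ _ := by gcongr
  calc ∑ j, ‖g j - m‖ ^ 2
      ≤ ∑ j, 3 * (‖g j - G j (w j) (v j)‖ ^ 2 + ‖G j x (v j) - m‖ ^ 2 + L ^ 2 * ‖w j - x‖ ^ 2) :=
        sum_le_sum fun j _ => hsplit j
    _ ≤ _ := by
        simp only [← mul_sum, sum_add_distrib]
        gcongr

theorem measurable_of_hasGradientAt_fst {E F : Type*} [NormedAddCommGroup E]
    [InnerProductSpace ℝ E] [CompleteSpace E] [MeasurableSpace E] [BorelSpace E]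
    [NormedAddCommGroup F] [NormedSpace ℝ F] [MeasurableSpace F]
    [OpensMeasurableSpace (E × F)] {f : E × F → ℝ} (hf : Differentiable ℝ f) {G : E → F → E}
    (hG : ∀ w v, HasGradientAt (fun w' => f (w', v)) (G w v) w) :
    Measurable fun p : E × F => G p.1 p.2 := by
  have hrepr : (fun p : E × F => G p.1 p.2) = fun p =>
      (InnerProductSpace.toDual ℝ E).symm
        ((fderiv ℝ f p).comp (ContinuousLinearMap.inl ℝ E F)) := by
    funext ⟨w, v⟩
    exact (hG w v).unique (hasFDerivAt_iff_hasGradientAt.1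
      ((hf (w, v)).hasFDerivAt.comp w (hasFDerivAt_prodMk_left w v)))
  rw [hrepr]
  exact ((InnerProductSpace.toDual ℝ E).symm.continuous.comp
    ((ContinuousLinearMap.compL ℝ E (E × F) ℝ).flip
      (ContinuousLinearMap.inl ℝ E F)).continuous).measurable.comp (measurable_fderiv ℝ f)

theorem memLp_comp_of_norm_le_add_mul_norm {Ω E F G : Type*} [MeasurableSpace Ω]
    {μ : Measure Ω} [IsFiniteMeasure μ] [NormedAddCommGroup E] [MeasurableSpace E] [BorelSpace E]
    [MeasurableSpace F] [NormedAddCommGroup G] [MeasurableSpace G] [BorelSpace G]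
    [SecondCountableTopology G] {φ : E → F → G} (hφ : Measurable fun p : E × F => φ p.1 p.2)
    {K L : ℝ} (hφle : ∀ x y, ‖φ x y‖ ≤ K + L * ‖x‖) {p : ENNReal} {X : Ω → E} {Y : Ω → F}
    (hX : MemLp X p μ) (hY : AEMeasurable Y μ) :
    MemLp (fun ω => φ (X ω) (Y ω)) p μ :=
  MemLp.of_le ((memLp_const K).add (hX.norm.const_mul L))
    (hφ.comp_aemeasurable (hX.aestronglyMeasurable.aemeasurable.prodMk hY)).aestronglyMeasurable
    (Filter.Eventually.of_forall fun ω => (hφle (X ω) (Y ω)).trans (le_abs_self _))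

theorem integral_le_of_ae_le_weighted_sum {Ω ι κ : Type*} [MeasurableSpace Ω] {μ : Measure Ω}
    [IsProbabilityMeasure μ] {s : Finset ι} {t : Finset κ} {f : Ω → ℝ} {A B : ι → κ → Ω → ℝ}
    {K M d σ : ℝ} {c : ι → ℝ}
    (hle : ∀ᵐ ω ∂μ, f ω ≤ K * ∑ r ∈ s, c r * (∑ j ∈ t, A r j ω + d + M * ∑ j ∈ t, B r j ω))
    (hf : 0 ≤ᵐ[μ] f) (hA : ∀ r j, Integrable (A r j) μ) (hB : ∀ r j, Integrable (B r j) μ)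
    (hK : 0 ≤ K) (hc : ∀ r, 0 ≤ c r) (hAσ : ∀ r j, ∫ ω, A r j ω ∂μ ≤ σ) :
    ∫ ω, f ω ∂μ ≤ K * ∑ r ∈ s, c r * (#t * σ + d + M * ∑ j ∈ t, ∫ ω, B r j ω ∂μ) := by
  have hAt : ∀ r, Integrable (fun ω => ∑ j ∈ t, A r j ω) μ := fun r =>
    integrable_finsetSum _ fun j _ => hA r j
  have hBt : ∀ r, Integrable (fun ω => ∑ j ∈ t, B r j ω) μ := fun r =>
    integrable_finsetSum _ fun j _ => hB r j
  have hterm : ∀ r, Integrable (fun ω => c r * (∑ j ∈ t, A r j ω + d + M * ∑ j ∈ t, B r j ω)) μ :=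
    fun r => (((hAt r).add (integrable_const d)).add ((hBt r).const_mul M)).const_mul (c r)
  calc ∫ ω, f ω ∂μ
      ≤ ∫ ω, K * ∑ r ∈ s, c r * (∑ j ∈ t, A r j ω + d + M * ∑ j ∈ t, B r j ω) ∂μ :=
        integral_mono_of_nonneg hf ((integrable_finsetSum _ fun r _ => hterm r).const_mul K) hle
    _ = K * ∑ r ∈ s, c r * (∑ j ∈ t, ∫ ω, A r j ω ∂μ + d + M * ∑ j ∈ t, ∫ ω, B r j ω ∂μ) := by
        rw [integral_const_mul, integral_finsetSum _ fun r _ => hterm r]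
        congr 1
        refine sum_congr rfl fun r _ => ?_
        rw [integral_const_mul,
          integral_add (by exact (hAt r).add (integrable_const d)) ((hBt r).const_mul M),
          integral_add (hAt r) (integrable_const d), integral_const_mul,
          integral_finsetSum _ fun j _ => hA r j, integral_finsetSum _ fun j _ => hB r j]
        simp
    _ ≤ _ := by
        gcongr with r
        · exact hc r
        · exact (sum_le_sum fun j _ => hAσ r j).trans (by simp)

section Gossip

variable {n E : Type*} [Fintype n] [DecidableEq n] [AddCommGroup E] [Module ℝ E]

theorem sum_smul_sum_pow_smul (P : Matrix n n ℝ) (m : ℕ) (x : n → E) (i : n) :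
    ∑ j, P i j • ∑ l, (P ^ m) j l • x l = ∑ l, (P ^ (m + 1)) i l • x l := by
  simp_rw [pow_succ', Matrix.mul_apply, smul_sum, smul_smul, sum_smul]
  exact sum_comm

theorem gossip_unroll (P : Matrix n n ℝ) (η : ℝ) (w g : ℕ → n → E)
    (hrec : ∀ t i, w (t + 1) i = ∑ j, P i j • (w t j - η • g t j)) (t : ℕ) (i : n) :
    w t i = ∑ j, (P ^ t) i j • w 0 j - η • ∑ r ∈ range t, ∑ j, (P ^ (t - r)) i j • g r j := by
  induction t generalizing i with
  | zero => simp [Matrix.one_apply]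
  | succ t ih =>
    have hpast : ∑ j, P i j • ∑ r ∈ range t, ∑ l, (P ^ (t - r)) j l • g r l
        = ∑ r ∈ range t, ∑ l, (P ^ (t + 1 - r)) i l • g r l := by
      simp_rw [smul_sum (s := range t)]
      rw [sum_comm]
      refine sum_congr rfl fun r hr => ?_
      rw [sum_smul_sum_pow_smul, Nat.sub_add_comm (mem_range.1 hr).le]
    simp_rw [hrec, ih, smul_sub, sum_sub_distrib, smul_comm (P i _) η, ← smul_sum,
      sum_smul_sum_pow_smul, hpast, sum_range_succ, Nat.add_sub_cancel_left, pow_one, smul_add]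
    abel

theorem sum_sum_smul_of_mem_doublyStochastic {M : Matrix n n ℝ} (hM : M ∈ doublyStochastic ℝ n)
    (x : n → E) : ∑ i, ∑ j, M i j • x j = ∑ j, x j := by
  rw [sum_comm]
  simp_rw [← sum_smul, sum_col_of_mem_doublyStochastic hM, one_smul]

end Gossip

theorem gossip_sub_mean_eq {E : Type*} [AddCommGroup E] [Module ℝ E] {N : ℕ}
    {P : Matrix (Fin N) (Fin N) ℝ} (hP : P ∈ doublyStochastic ℝ (Fin N)) (η : ℝ)
    (w g : ℕ → Fin N → E) (hrec : ∀ t i, w (t + 1) i = ∑ j, P i j • (w t j - η • g t j))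
    (hinit : ∀ j l, w 0 j = w 0 l) (k : ℕ) (i : Fin N) :
    w k i - (N : ℝ)⁻¹ • ∑ j, w k j
      = -(η • ∑ r ∈ range k, ∑ j, ((P ^ (k - r)) i j - (N : ℝ)⁻¹) • g r j) := by
  have hN : (N : ℝ) ≠ 0 := by exact_mod_cast i.pos.ne'
  have hw0 : ∀ j, w 0 j = w 0 i := fun j => hinit j i
  have hmean : (N : ℝ)⁻¹ • ∑ l, w k l = w 0 i - η • ∑ r ∈ range k, (N : ℝ)⁻¹ • ∑ j, g r j := by
    simp_rw [gossip_unroll P η w g hrec k, sum_sub_distrib, ← smul_sum,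
      sum_comm (s := univ) (t := range k), sum_sum_smul_of_mem_doublyStochastic (pow_mem hP _),
      hw0, sum_const, card_univ, Fintype.card_fin, smul_sub, smul_comm _ η, smul_sum]
    rw [← Nat.cast_smul_eq_nsmul ℝ, smul_smul, inv_mul_cancel₀ hN, one_smul]
  rw [gossip_unroll P η w g hrec k i, hmean]
  simp_rw [hw0, ← sum_smul, sum_row_of_mem_doublyStochastic (pow_mem hP k), one_smul, sub_smul,
    sum_sub_distrib, ← smul_sum]
  rw [smul_sub]
  abel

theorem gossip_sq_norm_sub_mean_le {E F : Type*} [SeminormedAddCommGroup E] [NormedSpace ℝ E]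
    {N : ℕ} {P : Matrix (Fin N) (Fin N) ℝ} (hP : P ∈ doublyStochastic ℝ (Fin N)) {b q : ℝ}
    (hq0 : 0 ≤ q) (hq1 : q < 1)
    (hmix : ∀ m, 1 ≤ m → ∀ i j, |(P ^ m) i j - (N : ℝ)⁻¹| ≤ b * q ^ m)
    (G : Fin N → E → F → E) {L ς : ℝ}
    (hLip : ∀ i (w w' : E) (v : F), ‖G i w v - G i w' v‖ ≤ L * ‖w - w'‖)
    (hvar : HasVariabilityBound G ς)
    (η : ℝ) (w g : ℕ → Fin N → E) (v : ℕ → Fin N → F)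
    (hrec : ∀ t i, w (t + 1) i = ∑ j, P i j • (w t j - η • g t j))
    (hinit : ∀ j l, w 0 j = w 0 l) (k : ℕ) (i : Fin N) :
    ‖w k i - (N : ℝ)⁻¹ • ∑ j, w k j‖ ^ 2 ≤ 3 * η ^ 2 * b ^ 2 * N / (1 - q) *
      ∑ r ∈ range k, q ^ (k - r) * (∑ j, ‖g r j - G j (w r j) (v r j)‖ ^ 2 + N * ς ^ 2
        + L ^ 2 * ∑ j, ‖w r j - (N : ℝ)⁻¹ • ∑ l, w r l‖ ^ 2) := by
  set a : ℕ → Fin N → ℝ := fun r j => (P ^ (k - r)) i j - (N : ℝ)⁻¹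
  set u : ℕ → Fin N → E := fun r j =>
    g r j - (N : ℝ)⁻¹ • ∑ l, G l ((N : ℝ)⁻¹ • ∑ m, w r m) (v r l)
  have hN : (N : ℝ) ≠ 0 := by exact_mod_cast i.pos.ne'
  have hcentre : ∀ r, ∑ j, a r j • g r j = ∑ j, a r j • u r j := by
    intro r
    have ha : ∑ j, a r j = 0 := by
      simp [a, sum_sub_distrib, sum_row_of_mem_doublyStochastic (pow_mem hP _), hN]
    simp_rw [u, smul_sub, sum_sub_distrib, ← sum_smul, ha, zero_smul, sub_zero]
  have hcs := sq_norm_sum_sum_smul_le (range k) univ a u (fun r => q ^ (k - r)) b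
    (fun r _ => pow_nonneg hq0 _)
    (fun r hr j _ => hmix (k - r) (by have := mem_range.1 hr; omega) i j)
  have hround : ∀ r, ∑ j, ‖u r j‖ ^ 2 ≤ 3 * (∑ j, ‖g r j - G j (w r j) (v r j)‖ ^ 2
      + N * ς ^ 2 + L ^ 2 * ∑ j, ‖w r j - (N : ℝ)⁻¹ • ∑ l, w r l‖ ^ 2) := fun r =>
    sum_sq_norm_sub_mean_gradient_le i.pos G hLip hvar (g r) (w r) (v r) _
  have herr : w k i - (N : ℝ)⁻¹ • ∑ j, w k j = -(η • ∑ r ∈ range k, ∑ j, a r j • u r j) := by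
    simp_rw [← hcentre]
    exact gossip_sub_mean_eq hP η w g hrec hinit k i
  rw [herr, norm_neg, norm_smul, mul_pow, Real.norm_eq_abs, sq_abs]
  rw [card_univ, Fintype.card_fin] at hcs
  have hS : 0 ≤ ∑ r ∈ range k, q ^ (k - r) * ∑ j, ‖u r j‖ ^ 2 := by positivity
  calc η ^ 2 * ‖∑ r ∈ range k, ∑ j, a r j • u r j‖ ^ 2
      ≤ η ^ 2 * (b ^ 2 * N * (1 - q)⁻¹ * ∑ r ∈ range k, q ^ (k - r) * ∑ j, ‖u r j‖ ^ 2) := by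
        gcongr
        exact hcs.trans (by gcongr; exact sum_range_pow_sub_le hq0 hq1 k)
    _ ≤ η ^ 2 * (b ^ 2 * N * (1 - q)⁻¹ * ∑ r ∈ range k, q ^ (k - r) *
          (3 * (∑ j, ‖g r j - G j (w r j) (v r j)‖ ^ 2
            + N * ς ^ 2 + L ^ 2 * ∑ j, ‖w r j - (N : ℝ)⁻¹ • ∑ l, w r l‖ ^ 2))) := by
        have : 0 ≤ 1 - q := by linarith
        gcongr with r
        exact hround r
    _ = _ := by simp only [mul_sum]; ring_nf

theorem gossip_integral_sq_norm_sub_mean_le {E F Ω : Type*} [NormedAddCommGroup E]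
    [InnerProductSpace ℝ E] [FiniteDimensional ℝ E] [NormedAddCommGroup F]
    [NormedSpace ℝ F] [FiniteDimensional ℝ F] [MeasurableSpace Ω] {μ : Measure Ω}
    [IsProbabilityMeasure μ] {N : ℕ} {f : Fin N → E × F → ℝ} (hf : ∀ i, Differentiable ℝ (f i))
    (G : Fin N → E → F → E) (hG : ∀ i w v, HasGradientAt (fun w' => f i (w', v)) (G i w v) w)
    {L ς : ℝ} (hLip : ∀ i (w w' : E) (v : F), ‖G i w v - G i w' v‖ ≤ L * ‖w - w'‖)
    (hvar : HasVariabilityBound G ς)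
    {P : Matrix (Fin N) (Fin N) ℝ} (hP : P ∈ doublyStochastic ℝ (Fin N)) {b q : ℝ}
    (hq0 : 0 ≤ q) (hq1 : q < 1)
    (hmix : ∀ m, 1 ≤ m → ∀ i j, |(P ^ m) i j - (N : ℝ)⁻¹| ≤ b * q ^ m)
    (η : ℝ) (w g : ℕ → Fin N → Ω → E) (v : ℕ → Fin N → Ω → F)
    (hw : ∀ t j, MemLp (w t j) 2 μ) (hv : ∀ t j, MemLp (v t j) 2 μ)
    (hg : ∀ t j, MemLp (g t j) 2 μ)
    (hrec : ∀ t i ω, w (t + 1) i ω = ∑ j, P i j • (w t j ω - η • g t j ω))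
    (hinit : ∀ i j, w 0 i =ᵐ[μ] w 0 j) {σ : ℝ}
    (hσ : ∀ t j, ∫ ω, ‖g t j ω - G j (w t j ω) (v t j ω)‖ ^ 2 ∂μ ≤ σ ^ 2) (k : ℕ) (i : Fin N) :
    ∫ ω, ‖w k i ω - (N : ℝ)⁻¹ • ∑ j, w k j ω‖ ^ 2 ∂μ ≤ 3 * η ^ 2 * b ^ 2 * N / (1 - q) *
      ((N * σ ^ 2 + N * ς ^ 2) / (1 - q) + L ^ 2 *
        ∑ r ∈ range k, q ^ (k - r) * ∑ j, ∫ ω, ‖w r j ω - (N : ℝ)⁻¹ • ∑ l, w r l ω‖ ^ 2 ∂μ) := by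
  have h1q : 0 < 1 - q := sub_pos.2 hq1
  have hK : 0 ≤ 3 * η ^ 2 * b ^ 2 * N / (1 - q) := div_nonneg (by positivity) h1q.le
  obtain hN1 | hN2 : N = 1 ∨ 2 ≤ N := by have := i.pos; omega
  · -- a single agent has no consensus error, while its gradients need not be square integrable
    subst hN1
    have hzero : ∀ ω, w k i ω - ((1 : ℕ) : ℝ)⁻¹ • ∑ j, w k j ω = 0 := by
      simp [Subsingleton.elim i 0]
    simp only [hzero, norm_zero, ne_eq, OfNat.ofNat_ne_zero, not_false_eq_true, zero_pow,
      integral_zero]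
    exact mul_nonneg hK (add_nonneg (div_nonneg (by positivity) h1q.le) (mul_nonneg (sq_nonneg L)
      (sum_nonneg fun r _ => mul_nonneg (pow_nonneg hq0 _) (by positivity))))
  borelize E F
  have hGL2 : ∀ j {X : Ω → E} {Y : Ω → F}, MemLp X 2 μ → MemLp Y 2 μ →
      MemLp (fun ω => G j (X ω) (Y ω)) 2 μ := by
    intro j X Y hX hY
    obtain ⟨K, hK⟩ := exists_norm_le_add_mul_norm_of_hasVariabilityBound hN2 G hLip hvar j
    exact memLp_comp_of_norm_le_add_mul_norm (measurable_of_hasGradientAt_fst (hf j) (hG j)) hK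
      hX hY.aestronglyMeasurable.aemeasurable
  have hmean : ∀ t, MemLp (fun ω => (N : ℝ)⁻¹ • ∑ j, w t j ω) 2 μ := fun t =>
    (memLp_finsetSum univ fun j _ => hw t j).const_smul (N : ℝ)⁻¹
  have hsq : ∀ {X : Ω → E}, MemLp X 2 μ → Integrable (fun ω => ‖X ω‖ ^ 2) μ :=
    fun hX => hX.norm.integrable_sq
  have hinit' : ∀ᵐ ω ∂μ, ∀ j l, w 0 j ω = w 0 l ω :=
    ae_all_iff.2 fun j => ae_all_iff.2 fun l => hinit j l
  have hpt : ∀ᵐ ω ∂μ, ‖w k i ω - (N : ℝ)⁻¹ • ∑ j, w k j ω‖ ^ 2 ≤ 3 * η ^ 2 * b ^ 2 * N / (1 - q) *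
      ∑ r ∈ range k, q ^ (k - r) * (∑ j, ‖g r j ω - G j (w r j ω) (v r j ω)‖ ^ 2 + N * ς ^ 2
        + L ^ 2 * ∑ j, ‖w r j ω - (N : ℝ)⁻¹ • ∑ l, w r l ω‖ ^ 2) := by
    filter_upwards [hinit'] with ω hω
    exact gossip_sq_norm_sub_mean_le hP hq0 hq1 hmix G hLip hvar η (fun t j => w t j ω)
      (fun t j => g t j ω) (fun t j => v t j ω) (fun t i => hrec t i ω) hω k i
  have hint := integral_le_of_ae_le_weighted_sum hpt (ae_of_all _ fun ω => sq_nonneg _)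
    (fun r j => hsq ((hg r j).sub (hGL2 j (hw r j) (hv r j))))
    (fun r j => hsq ((hw r j).sub (hmean r))) hK (fun r => pow_nonneg hq0 _) hσ
  rw [card_univ, Fintype.card_fin] at hint
  exact hint.trans (mul_le_mul_of_nonneg_left
    (sum_range_pow_sub_mul_add_le hq0 hq1 (by positivity) _ _ k) hK)

theorem stmt14_general {E F : Type*}
    [NormedAddCommGroup E] [InnerProductSpace ℝ E] [FiniteDimensional ℝ E]
    [NormedAddCommGroup F] [InnerProductSpace ℝ F] [FiniteDimensional ℝ F]
    {Ω : Type*} [MeasurableSpace Ω] (μ : Measure Ω) [IsProbabilityMeasure μ]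
    (N : ℕ)
    (Lf : Fin N → E × F → ℝ) (hdiff : ∀ i, Differentiable ℝ (Lf i))
    (gradW : Fin N → E → F → E)
    (hgradW : ∀ i w v, HasGradientAt (fun w' => Lf i (w', v)) (gradW i w v) w)
    (L : ℝ)
    (hLipW : ∀ i (w w' : E) (v : F), ‖gradW i w v - gradW i w' v‖ ≤ L * ‖w - w'‖)
    (ς : ℝ)
    (hvarGlob : ∀ (w : E) (v : Fin N → F),
      (N : ℝ)⁻¹ * ∑ i, ‖gradW i w (v i) - (N : ℝ)⁻¹ • ∑ j, gradW j w (v j)‖ ^ 2 ≤ ς ^ 2)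
    (P : Matrix (Fin N) (Fin N) ℝ) (hPnn : ∀ i j, 0 ≤ P i j)
    (hProw : ∀ i, ∑ j, P i j = 1) (hPcol : ∀ j, ∑ i, P i j = 1)
    (C q : ℝ) (hq0 : 0 < q) (hq1 : q < 1)
    (hmix : ∀ m : ℕ, 1 ≤ m → ∀ i j,
      |(P ^ m) i j - 1 / (N : ℝ)| ≤ C / (2 * Real.sqrt 2) * q ^ m)
    (w : ℕ → Fin N → Ω → E) (v : ℕ → Fin N → Ω → F) (g : ℕ → Fin N → Ω → E)
    (hw2 : ∀ t j, MemLp (w t j) 2 μ) (hv2 : ∀ t j, MemLp (v t j) 2 μ)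
    (hg2 : ∀ t j, MemLp (g t j) 2 μ)
    (ηw : ℝ)
    (hinit : ∀ i j, w 0 i =ᵐ[μ] w 0 j)
    (hrec : ∀ t i ω, w (t + 1) i ω = ∑ j, P i j • (w t j ω - ηw • g t j ω))
    (σ₁ : ℝ)
    (hvar : ∀ t j, ∫ ω, ‖g t j ω - gradW j (w t j ω) (v (t + 1) j ω)‖ ^ 2 ∂μ ≤ σ₁ ^ 2)
    (wbar : ℕ → Ω → E) (hwbar : ∀ t ω, wbar t ω = (N : ℝ)⁻¹ • ∑ j, w t j ω) :
    ∀ k : ℕ, 1 ≤ k → ∀ i,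
      ∫ ω, ‖w k i ω - wbar k ω‖ ^ 2 ∂μ ≤
        6 * ηw ^ 2 * C ^ 2 * N ^ 2 * σ₁ ^ 2 / (1 - q) ^ 2
          + 18 * ηw ^ 2 * C ^ 2 * N ^ 2 * ς ^ 2 / (1 - q) ^ 2
          + 18 * ηw ^ 2 * C ^ 2 * L ^ 2 * N / (1 - q) *
              ∑ r ∈ Finset.range k, q ^ (k - r) *
                ∑ j, ∫ ω, ‖w r j ω - wbar r ω‖ ^ 2 ∂μ
          + 18 * ηw ^ 2 * C ^ 2 * N ^ 2 / (1 - q) *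
              ∑ r ∈ Finset.range k, q ^ (k - r) *
                ∫ ω, ‖(N : ℝ)⁻¹ • ∑ j, gradW j (wbar r ω) (v (r + 1) j ω)‖ ^ 2 ∂μ := by
  intro k _ i
  simp only [hwbar]
  have h1q : 0 < 1 - q := sub_pos.2 hq1
  have hmain := gossip_integral_sq_norm_sub_mean_le hdiff gradW hgradW hLipW hvarGlob
    (mem_doublyStochastic_iff_sum.2 ⟨hPnn, hProw, hPcol⟩) hq0.le hq1
    (fun m hm i j => by simpa only [one_div] using hmix m hm i j) ηw w g (fun t => v (t + 1))
    hw2 (fun t => hv2 (t + 1)) hg2 hrec hinit hvar k i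
  rw [div_pow, mul_pow, Real.sq_sqrt zero_le_two] at hmain
  set S := ∑ r ∈ range k, q ^ (k - r) * ∑ j, ∫ ω, ‖w r j ω - (N : ℝ)⁻¹ • ∑ l, w r l ω‖ ^ 2 ∂μ
  have hσ : 0 ≤ ηw ^ 2 * C ^ 2 * N ^ 2 * σ₁ ^ 2 / (1 - q) ^ 2 := by positivity
  have hς : 0 ≤ ηw ^ 2 * C ^ 2 * N ^ 2 * ς ^ 2 / (1 - q) ^ 2 := by positivity
  have hS : 0 ≤ ηw ^ 2 * C ^ 2 * L ^ 2 * N / (1 - q) * S := mul_nonneg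
    (div_nonneg (by positivity) h1q.le)
    (sum_nonneg fun r _ => mul_nonneg (pow_nonneg hq0.le _) (by positivity))
  refine le_add_of_le_of_nonneg ?_ (mul_nonneg (div_nonneg (by positivity) h1q.le)
    (sum_nonneg fun r _ => mul_nonneg (pow_nonneg hq0.le _) (by positivity)))
  calc _ ≤ _ := hmain
    _ = 3 / 8 * (ηw ^ 2 * C ^ 2 * N ^ 2 * σ₁ ^ 2 / (1 - q) ^ 2)
          + 3 / 8 * (ηw ^ 2 * C ^ 2 * N ^ 2 * ς ^ 2 / (1 - q) ^ 2)
          + 3 / 8 * (ηw ^ 2 * C ^ 2 * L ^ 2 * N / (1 - q) * S) := by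
        field_simp
        ring
    _ ≤ 6 * (ηw ^ 2 * C ^ 2 * N ^ 2 * σ₁ ^ 2 / (1 - q) ^ 2)
          + 18 * (ηw ^ 2 * C ^ 2 * N ^ 2 * ς ^ 2 / (1 - q) ^ 2)
          + 18 * (ηw ^ 2 * C ^ 2 * L ^ 2 * N / (1 - q) * S) := by linarith
    _ = _ := by ring

/-- consensus-error bound for the shared-adapter iterates of PE-MA. -/
theorem stmt14 {E F : Type*}
    [NormedAddCommGroup E] [InnerProductSpace ℝ E] [FiniteDimensional ℝ E]
    [NormedAddCommGroup F] [InnerProductSpace ℝ F] [FiniteDimensional ℝ F]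
    {Ω : Type*} [MeasurableSpace Ω] (μ : Measure Ω) [IsProbabilityMeasure μ]
    (N : ℕ) (hN : 1 ≤ N)
    (Lf : Fin N → E × F → ℝ) (hdiff : ∀ i, Differentiable ℝ (Lf i))
    (gradW : Fin N → E → F → E)
    (hgradW : ∀ i w v, HasGradientAt (fun w' => Lf i (w', v)) (gradW i w v) w)
    (L : ℝ) (hL : 0 < L)
    (hLipW : ∀ i (w w' : E) (v : F), ‖gradW i w v - gradW i w' v‖ ≤ L * ‖w - w'‖)
    (ς : ℝ)
    (hvarGlob : ∀ (w : E) (v : Fin N → F),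
      (N : ℝ)⁻¹ * ∑ i, ‖gradW i w (v i) - (N : ℝ)⁻¹ • ∑ j, gradW j w (v j)‖ ^ 2 ≤ ς ^ 2)
    (P : Matrix (Fin N) (Fin N) ℝ) (hPnn : ∀ i j, 0 ≤ P i j)
    (hProw : ∀ i, ∑ j, P i j = 1) (hPcol : ∀ j, ∑ i, P i j = 1)
    (C q : ℝ) (hC : 0 < C) (hq0 : 0 < q) (hq1 : q < 1)
    (hmix : ∀ m : ℕ, 1 ≤ m → ∀ i j,
      |(P ^ m) i j - 1 / (N : ℝ)| ≤ C / (2 * Real.sqrt 2) * q ^ m)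
    (w : ℕ → Fin N → Ω → E) (v : ℕ → Fin N → Ω → F) (g : ℕ → Fin N → Ω → E)
    (hw2 : ∀ t j, MemLp (w t j) 2 μ) (hv2 : ∀ t j, MemLp (v t j) 2 μ)
    (hg2 : ∀ t j, MemLp (g t j) 2 μ)
    (ηw : ℝ) (hηw : 0 < ηw)
    (hinit : ∀ i j, w 0 i =ᵐ[μ] w 0 j)
    (hrec : ∀ t i ω, w (t + 1) i ω = ∑ j, P i j • (w t j ω - ηw • g t j ω))
    (σ₁ : ℝ)
    (hvar : ∀ t j, ∫ ω, ‖g t j ω - gradW j (w t j ω) (v (t + 1) j ω)‖ ^ 2 ∂μ ≤ σ₁ ^ 2)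
    (wbar : ℕ → Ω → E) (hwbar : ∀ t ω, wbar t ω = (N : ℝ)⁻¹ • ∑ j, w t j ω) :
    ∀ k : ℕ, 1 ≤ k → ∀ i,
      ∫ ω, ‖w k i ω - wbar k ω‖ ^ 2 ∂μ ≤
        6 * ηw ^ 2 * C ^ 2 * N ^ 2 * σ₁ ^ 2 / (1 - q) ^ 2
          + 18 * ηw ^ 2 * C ^ 2 * N ^ 2 * ς ^ 2 / (1 - q) ^ 2
          + 18 * ηw ^ 2 * C ^ 2 * L ^ 2 * N / (1 - q) *
              ∑ r ∈ Finset.range k, q ^ (k - r) *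
                ∑ j, ∫ ω, ‖w r j ω - wbar r ω‖ ^ 2 ∂μ
          + 18 * ηw ^ 2 * C ^ 2 * N ^ 2 / (1 - q) *
              ∑ r ∈ Finset.range k, q ^ (k - r) *
                ∫ ω, ‖(N : ℝ)⁻¹ • ∑ j, gradW j (wbar r ω) (v (r + 1) j ω)‖ ^ 2 ∂μ :=
  stmt14_general μ N Lf hdiff gradW hgradW L hLipW ς hvarGlob P hPnn hProw hPcol C q hq0 hq1 hmix w
    v g hw2 hv2 hg2 ηw hinit hrec σ₁ hvar wbar hwbar
end
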